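/- Let U ⊆ X be open and let ⟨α⟩, ⟨β⟩ ∈ X̃ with α(1) ∈ U and β(1) ∈ U. Then the sets ⟨α,U⟩ and ⟨β,U⟩ are either disjoint or identical. Moreover, if U is a path-connected open neighborhood of a point u ∈ X, then p⁻¹(U) = ⋃ { ⟨α,U⟩ : ⟨α⟩ ∈ p⁻¹(u) }. -/

import Mathlib

open unitInterval

noncomputable section

/-- The homotopy class of a loop, as an element of the fundamental group. -/
def pathClass {X : Type*} [TopologicalSpace X] {x : X} (γ : Path x x) :
    FundamentalGroup X x :=
  FundamentalGroup.fromPath (X := TopCat.of X) (Quotient.mk (Path.Homotopic.setoid x x) γ)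

/-- A continuous path in `X` starting at the basepoint `x`. -/
structure RawPath (X : Type*) [TopologicalSpace X] (x : X) where
  toFun : C(unitInterval, X)
  source : toFun 0 = x

variable {X : Type*} [TopologicalSpace X] {x : X}

/-- The endpoint `α(1)` of a path starting at the basepoint. -/
def RawPath.endpt (α : RawPath X x) : X := α.toFun 1

/-- A raw path, as a bundled `Path` from `x` to its endpoint. -/
def RawPath.path (α : RawPath X x) : Path x α.endpt := ⟨α.toFun, α.source, rfl⟩

/-- The relation `α ∼ β` iff `α(1) = β(1)` and `[α · β⁻] ∈ H`. -/
def SpanierRel (H : Subgroup (FundamentalGroup X x)) (α β : RawPath X x) : Prop :=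
  ∃ hend : α.endpt = β.endpt,
    pathClass (α.path.trans (β.path.symm.cast hend rfl)) ∈ H

/-- The space `X̃`: paths starting at `x`, modulo `α ∼ β` iff `α(1) = β(1)`
and `[α · β⁻] ∈ H`. -/
def SpanierSpace (H : Subgroup (FundamentalGroup X x)) : Type _ :=
  Quot (SpanierRel H)

/-- The equivalence class `⟨α⟩ ∈ X̃` of a path `α` starting at `x`. -/
def SpanierSpace.mk (H : Subgroup (FundamentalGroup X x)) (α : RawPath X x) :
    SpanierSpace H :=
  Quot.mk _ α

/-- The endpoint projection `p : X̃ → X`, `p ⟨α⟩ = α(1)`. -/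
def spanierProj (H : Subgroup (FundamentalGroup X x)) : SpanierSpace H → X :=
  Quot.lift RawPath.endpt (fun _ _ hab => by obtain ⟨h, -⟩ := hab; exact h)

/-- The concatenation `α · γ` of a path `α` starting at `x` with a path `γ`
starting at `α(1)`. -/
def RawPath.extend (α : RawPath X x) {y : X} (γ : Path α.endpt y) : RawPath X x :=
  ⟨(α.path.trans γ).toContinuousMap, (α.path.trans γ).source'⟩

/-- The basic set `⟨α,U⟩ = {⟨α·γ⟩ : γ a continuous path in U with γ(0) = α(1)}`. -/
def basicSet (H : Subgroup (FundamentalGroup X x)) (α : RawPath X x) (U : Set X) :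
    Set (SpanierSpace H) :=
  {z | ∃ (y : X) (γ : Path α.endpt y), Set.range γ ⊆ U ∧ z = SpanierSpace.mk H (α.extend γ)}

/-- The topology on `X̃` generated by the basic sets `⟨α,U⟩` with `U` open
and `α(1) ∈ U`. -/
instance spanierTopology (H : Subgroup (FundamentalGroup X x)) :
    TopologicalSpace (SpanierSpace H) :=
  TopologicalSpace.generateFrom
    {S | ∃ (α : RawPath X x) (U : Set X), IsOpen U ∧ α.endpt ∈ U ∧ S = basicSet H α U}

/-- The subgroup-like subset `π(α,U) = [α]·i_#(π₁(U,α(1)))·[α]⁻¹` of `π₁(X,x)`: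
all classes `[α·γ·α⁻]` with `γ` a loop at `α(1)` inside `U`. -/
def piSet (α : RawPath X x) (U : Set X) : Set (FundamentalGroup X x) :=
  {g | ∃ γ : Path α.endpt α.endpt, Set.range γ ⊆ U ∧
    g = pathClass (α.path.trans (γ.trans α.path.symm))}

end

/-! An element `⟨α⟩` is the `H`-class of a path from `x`, and right concatenation respects
`∼`: if `⟨p⟩ = ⟨q⟩` then `⟨p·γ⟩ = ⟨q·γ⟩`, since `(p·γ)·(q·γ)⁻ ≃ p·q⁻`. Hence if `⟨α·γ⟩ = ⟨β·δ⟩`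
with `γ, δ` in `U`, every `⟨α·ε⟩ = ⟨(α·γ)·(γ⁻·ε)⟩` equals `⟨β·(δ·γ⁻·ε)⟩ ∈ ⟨β,U⟩`, so two
basic sets that meet coincide. For the second claim, a path `γ` in `U` from `p⟨α⟩` to `u` gives
`⟨α⟩ = ⟨(α·γ)·γ⁻⟩ ∈ ⟨α·γ,U⟩`. -/

section

variable {X : Type*} [TopologicalSpace X] {x a b y : X}

section pathClass

open Path.Homotopic.Quotient

lemma pathClass_eq_mk (p : Path x x) : pathClass p = mk p := rfl

lemma pathClass_trans_symm_of_homotopic {p q : Path x a} (h : p.Homotopic q) :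
    pathClass (p.trans q.symm) = 1 := by
  rw [pathClass_eq_mk, mk_trans, eq.2 h, mk_symm, trans_symm, FundamentalGroup.one_def]

lemma inv_pathClass_trans_symm (p q : Path x a) :
    (pathClass (p.trans q.symm))⁻¹ = pathClass (q.trans p.symm) := by
  rw [FundamentalGroup.inv_def, pathClass_eq_mk, ← mk_symm, Path.trans_symm, Path.symm_symm]
  rfl

lemma pathClass_trans_symm_mul_pathClass_trans_symm (p q r : Path x a) :
    pathClass (q.trans r.symm) * pathClass (p.trans q.symm) = pathClass (p.trans r.symm) := by
  simp [pathClass_eq_mk, FundamentalGroup.mul_def, ← trans_assoc (mk q).symm]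

lemma pathClass_trans_trans_symm_trans (p q : Path x a) (γ : Path a y) :
    pathClass ((p.trans γ).trans (q.trans γ).symm) = pathClass (p.trans q.symm) := by
  simp [pathClass_eq_mk, Path.trans_symm, ← trans_assoc (mk γ)]

end pathClass

/-- Paths with a fixed endpoint `a` avoid the casts along `α.endpt = β.endpt` that comparing
raw paths requires; `α` itself is `α.path.toRawPath` definitionally. -/
def Path.toRawPath (p : Path x a) : RawPath X x := ⟨p.toContinuousMap, p.source⟩

@[simp]
lemma Path.toRawPath_endpt (p : Path x a) : p.toRawPath.endpt = a := p.target

lemma RawPath.exists_toRawPath_eq (α : RawPath X x) (h : α.endpt = b) :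
    ∃ p : Path x b, p.toRawPath = α :=
  ⟨α.path.cast rfl h.symm, rfl⟩

variable {H : Subgroup (FundamentalGroup X x)}

lemma spanierRel_toRawPath_iff {p q : Path x a} :
    SpanierRel H p.toRawPath q.toRawPath ↔ pathClass (p.trans q.symm) ∈ H :=
  ⟨fun ⟨_, hm⟩ => hm, fun hm => ⟨p.target.trans q.target.symm, hm⟩⟩

variable (H) in
lemma spanierRel_equivalence : Equivalence (SpanierRel H) where
  refl α := spanierRel_toRawPath_iff.2 <| by
    rw [pathClass_trans_symm_of_homotopic (Path.Homotopic.refl α.path)]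
    exact H.one_mem
  symm := by
    rintro α β hαβ
    obtain ⟨p, rfl⟩ := α.exists_toRawPath_eq hαβ.1
    have hm := (spanierRel_toRawPath_iff (q := β.path)).1 hαβ
    refine (spanierRel_toRawPath_iff (p := β.path)).2 ?_
    rw [← inv_pathClass_trans_symm]
    exact H.inv_mem hm
  trans := by
    rintro α β ζ hαβ hβζ
    obtain ⟨q, rfl⟩ := β.exists_toRawPath_eq hβζ.1
    obtain ⟨p, rfl⟩ := α.exists_toRawPath_eq (hαβ.1.trans hβζ.1)
    have hm₁ := spanierRel_toRawPath_iff.1 hαβ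
    have hm₂ := (spanierRel_toRawPath_iff (q := ζ.path)).1 hβζ
    refine (spanierRel_toRawPath_iff (q := ζ.path)).2 ?_
    rw [← pathClass_trans_symm_mul_pathClass_trans_symm p q]
    exact H.mul_mem hm₂ hm₁

namespace SpanierSpace

lemma mk_eq_mk_iff {α β : RawPath X x} : mk H α = mk H β ↔ SpanierRel H α β :=
  (Quot.eq).trans (Equivalence.eqvGen_iff (spanierRel_equivalence H))

lemma mk_toRawPath_eq_iff {p q : Path x a} :
    mk H p.toRawPath = mk H q.toRawPath ↔ pathClass (p.trans q.symm) ∈ H :=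
  mk_eq_mk_iff.trans spanierRel_toRawPath_iff

lemma mk_toRawPath_eq_of_homotopic {p q : Path x a} (h : p.Homotopic q) :
    mk H p.toRawPath = mk H q.toRawPath := by
  rw [mk_toRawPath_eq_iff, pathClass_trans_symm_of_homotopic h]
  exact H.one_mem

lemma mk_toRawPath_trans_eq {p q : Path x a} (h : mk H p.toRawPath = mk H q.toRawPath)
    (γ : Path a y) : mk H (p.trans γ).toRawPath = mk H (q.trans γ).toRawPath := by
  rw [mk_toRawPath_eq_iff, pathClass_trans_trans_symm_trans]
  exact mk_toRawPath_eq_iff.1 h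

end SpanierSpace

lemma spanierProj_mk (α : RawPath X x) : spanierProj H (SpanierSpace.mk H α) = α.endpt := rfl

lemma mem_basicSet_toRawPath_iff {p : Path x a} {U : Set X} {z : SpanierSpace H} :
    z ∈ basicSet H p.toRawPath U ↔
      ∃ (y : X) (γ : Path a y), Set.range γ ⊆ U ∧ z = SpanierSpace.mk H (p.trans γ).toRawPath := by
  constructor
  · rintro ⟨y, γ, hγ, rfl⟩
    exact ⟨y, γ.cast p.target.symm rfl, hγ, rfl⟩
  · rintro ⟨y, γ, hγ, rfl⟩
    exact ⟨y, γ.cast p.target rfl, hγ, rfl⟩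

open SpanierSpace Path.Homotopic.Quotient in
lemma basicSet_subset_of_mk_eq {U : Set X} {p : Path x a} {q : Path x b}
    {γ : Path a y} {δ : Path b y} (hγ : Set.range γ ⊆ U) (hδ : Set.range δ ⊆ U)
    (h : mk H (p.trans γ).toRawPath = mk H (q.trans δ).toRawPath) :
    basicSet H p.toRawPath U ⊆ basicSet H q.toRawPath U := by
  intro z hz
  obtain ⟨w, ε, hε, rfl⟩ := mem_basicSet_toRawPath_iff.1 hz
  refine mem_basicSet_toRawPath_iff.2 ⟨w, δ.trans (γ.symm.trans ε), ?_, ?_⟩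
  · simp only [Path.trans_range, Path.symm_range]
    exact Set.union_subset hδ (Set.union_subset hγ hε)
  calc mk H (p.trans ε).toRawPath
      = mk H ((p.trans γ).trans (γ.symm.trans ε)).toRawPath :=
        mk_toRawPath_eq_of_homotopic (eq.1 (by simp [← trans_assoc (mk γ)]))
    _ = mk H ((q.trans δ).trans (γ.symm.trans ε)).toRawPath := mk_toRawPath_trans_eq h _
    _ = mk H (q.trans (δ.trans (γ.symm.trans ε))).toRawPath :=
        mk_toRawPath_eq_of_homotopic (.trans_assoc q δ _)

lemma basicSet_eq_of_mk_eq {U : Set X} {y₁ y₂ : X} {p : Path x a} {q : Path x b}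
    {γ : Path a y₁} {δ : Path b y₂} (hγ : Set.range γ ⊆ U) (hδ : Set.range δ ⊆ U)
    (h : SpanierSpace.mk H (p.trans γ).toRawPath = SpanierSpace.mk H (q.trans δ).toRawPath) :
    basicSet H p.toRawPath U = basicSet H q.toRawPath U := by
  obtain rfl : y₁ = y₂ := by simpa [spanierProj_mk] using congrArg (spanierProj H) h
  exact (basicSet_subset_of_mk_eq hγ hδ h).antisymm (basicSet_subset_of_mk_eq hδ hγ h.symm)

lemma basicSet_subset_preimage_spanierProj (α : RawPath X x) (U : Set X) :
    basicSet H α U ⊆ spanierProj H ⁻¹' U := by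
  rintro _ ⟨y, γ, hγ, rfl⟩
  show (α.path.trans γ).toRawPath.endpt ∈ U
  rw [Path.toRawPath_endpt]
  exact hγ ⟨1, γ.target⟩

open Path.Homotopic.Quotient in
lemma preimage_spanierProj_subset_iUnion_basicSet {U : Set X} {u : X} (hu : u ∈ U)
    (hU : IsPathConnected U) :
    spanierProj H ⁻¹' U ⊆ ⋃ (α : RawPath X x) (_ : α.endpt = u), basicSet H α U := by
  intro z hz
  induction z using Quot.ind with | mk α =>
  obtain ⟨γ, hγU⟩ := hU.joinedIn α.endpt hz u hu
  refine Set.mem_iUnion₂.2 ⟨(α.path.trans γ).toRawPath, Path.toRawPath_endpt _,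
    mem_basicSet_toRawPath_iff.2 ⟨_, γ.symm, ?_, ?_⟩⟩
  · rw [Path.symm_range]
    rintro _ ⟨t, rfl⟩
    exact hγU t
  · exact SpanierSpace.mk_toRawPath_eq_of_homotopic (p := α.path) (eq.1 (by simp))

end

theorem basicSet_eq_or_disjoint_and_preimage_eq_iUnion_general
    {X : Type*} [TopologicalSpace X] {x : X} (H : Subgroup (FundamentalGroup X x))
    {U : Set X} :
    (∀ α β : RawPath X x, α.endpt ∈ U → β.endpt ∈ U →
      basicSet H α U = basicSet H β U ∨ Disjoint (basicSet H α U) (basicSet H β U)) ∧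
    (∀ u ∈ U, IsPathConnected U →
      spanierProj H ⁻¹' U = ⋃ (α : RawPath X x) (_ : α.endpt = u), basicSet H α U) := by
  refine ⟨fun α β _ _ => or_iff_not_imp_right.2 fun hαβ => ?_, fun u hu hU => ?_⟩
  · obtain ⟨_, ⟨_, γ, hγ, rfl⟩, ⟨_, δ, hδ, h⟩⟩ := Set.not_disjoint_iff.1 hαβ
    exact basicSet_eq_of_mk_eq (p := α.path) (q := β.path) hγ hδ h
  · exact (preimage_spanierProj_subset_iUnion_basicSet hu hU).antisymm
      (Set.iUnion₂_subset fun α _ => basicSet_subset_preimage_spanierProj α U)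

/-- Two basic sets `⟨α,U⟩`, `⟨β,U⟩` with the same open `U` are disjoint or identical;
moreover, if `U` is a path-connected open neighborhood of `u`, then `p⁻¹(U)` is the
union of the sets `⟨α,U⟩` over all `⟨α⟩ ∈ p⁻¹(u)`. -/
theorem basicSet_eq_or_disjoint_and_preimage_eq_iUnion
    {X : Type*} [TopologicalSpace X] {x : X} (H : Subgroup (FundamentalGroup X x))
    {U : Set X} (hUopen : IsOpen U) :
    (∀ α β : RawPath X x, α.endpt ∈ U → β.endpt ∈ U →
      basicSet H α U = basicSet H β U ∨ Disjoint (basicSet H α U) (basicSet H β U)) ∧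
    (∀ u ∈ U, IsPathConnected U →
      spanierProj H ⁻¹' U = ⋃ (α : RawPath X x) (_ : α.endpt = u), basicSet H α U) :=
  basicSet_eq_or_disjoint_and_preimage_eq_iUnion_general H
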